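/- Let S_{t+1}^∘ be the fully looped star on vertices v_0, v_1, …, v_t with center v_0 (edges v_0 v_i for 1 ≤ i ≤ t and a loop at every vertex), and let n = (n_0, n_1, …, n_t) be any vector of positive integers. Then the blow-up of S_{t+1}^∘ by n is Hoffman-London. -/

import Mathlib

/-- The number of `H`-colorings of a simple graph `G`, where the target graph `H`
is given by a (possibly reflexive) adjacency relation `HAdj` on a finite vertex set. -/
noncomputable def homCount {VG VH : Type} [Fintype VG] [Fintype VH]
    (G : SimpleGraph VG) (HAdj : VH → VH → Prop) : ℕ :=
  Nat.card {f : VG → VH // ∀ u v : VG, G.Adj u v → HAdj (f u) (f v)}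

/-- The adjacency relation of the blow-up of the fully looped star `S_{t+1}^∘` (center
`v_0`, leaves `v_1, …, v_t`, loops everywhere) by the vector `m = (m 0, …, m t)`: vertex
`⟨i, x⟩` is in the cluster replacing `v_i`, and two vertices are adjacent exactly when
they lie in the same cluster or one of them lies in the cluster of the center. -/
def starBlowupAdj (t : ℕ) (m : Fin (t + 1) → ℕ) :
    (Σ i : Fin (t + 1), Fin (m i)) → (Σ i : Fin (t + 1), Fin (m i)) → Prop :=
  fun x y => x.1 = y.1 ∨ x.1 = 0 ∨ y.1 = 0

/-!
Let `M` be the adjacency matrix of the target and, for a tree `T` rooted at `r`, let `Y_T x` count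
the colorings sending `r` to `x`. Cutting `T` at an edge `r r₁` gives `Y_T = Y_{T'} * (M *ᵥ Y_{T₁})`,
and the path on `k + 1` vertices rooted at an end has `Y = M ^ k *ᵥ 1`. Fix a ranking `κ` of the
target vertices such that `M` maps `κ`-monotone vectors to `κ`-monotone vectors. Induction over the
cut then shows that `Y_T` is `κ`-monotone and that `u ⬝ᵥ M ^ n *ᵥ 1 ≤ u ⬝ᵥ Y_T` for every
`κ`-monotone weight `u`, where `T` has `n + 1` vertices; the one inequality needed is
`u ⬝ᵥ M ^ q *ᵥ c ≤ (u * c) ⬝ᵥ M ^ q *ᵥ 1` for `κ`-monotone `u` and `c`, a Chebyshev sum inequality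
for the symmetric matrix `M ^ q`, which merges two paths into a longer one. Taking `u = 1` gives
the theorem. For the blow-up of the looped star, ranking the center cluster on top and the leaf
clusters by size is such a ranking.
-/

open Matrix

section Chebyshev

variable {α K : Type*} [LinearOrder K]

def MonotoneAlong (κ : α → K) (w : α → ℕ) : Prop :=
  ∀ ⦃x y⦄, κ x ≤ κ y → w x ≤ w y

variable {κ : α → K} {u v : α → ℕ}

lemma MonotoneAlong.one : MonotoneAlong κ 1 := fun _ _ _ => le_rfl

lemma MonotoneAlong.mul (hu : MonotoneAlong κ u) (hv : MonotoneAlong κ v) :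
    MonotoneAlong κ (u * v) :=
  fun _ _ h => Nat.mul_le_mul (hu h) (hv h)

lemma MonotoneAlong.mul_add_mul_le (hu : MonotoneAlong κ u) (hv : MonotoneAlong κ v) (x y : α) :
    u x * v y + u y * v x ≤ u x * v x + u y * v y := by
  rcases le_total (κ x) (κ y) with h | h
  · exact mul_add_mul_le_mul_add_mul (hu h) (hv h)
  · simpa only [add_comm] using mul_add_mul_le_mul_add_mul (hu h) (hv h)

/-- Chebyshev's sum inequality, weighted by a symmetric matrix. -/
lemma MonotoneAlong.dotProduct_mulVec_le [Fintype α] {A : Matrix α α ℕ} (hA : A.IsSymm)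
    (hu : MonotoneAlong κ u) (hv : MonotoneAlong κ v) :
    u ⬝ᵥ (A *ᵥ v) ≤ (u * v) ⬝ᵥ (A *ᵥ 1) := by
  -- Sum the rearrangement inequality `MonotoneAlong.mul_add_mul_le` against `A x y`.
  have hswap : ∀ f : α → α → ℕ, ∑ x, ∑ y, A x y * f y x = ∑ x, ∑ y, A x y * f x y := by
    intro f
    rw [Finset.sum_comm]
    simp only [hA.apply]
  have hlhs : 2 * (u ⬝ᵥ (A *ᵥ v)) = ∑ x, ∑ y, A x y * (u x * v y + u y * v x) := by
    rw [two_mul]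
    simp only [mul_add, Finset.sum_add_distrib, hswap fun x y => u x * v y]
    simp only [dotProduct, mulVec, Finset.mul_sum]
    congr 1 <;> refine Finset.sum_congr rfl fun x _ => Finset.sum_congr rfl fun y _ => by ring
  have hrhs : 2 * ((u * v) ⬝ᵥ (A *ᵥ 1)) = ∑ x, ∑ y, A x y * (u x * v x + u y * v y) := by
    rw [two_mul]
    simp only [mul_add, Finset.sum_add_distrib, hswap fun x y => u x * v x]
    simp only [dotProduct, mulVec, Finset.mul_sum, Pi.mul_apply, Pi.one_apply]
    congr 1 <;> refine Finset.sum_congr rfl fun x _ => Finset.sum_congr rfl fun y _ => by ring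
  have h2 : 2 * (u ⬝ᵥ (A *ᵥ v)) ≤ 2 * ((u * v) ⬝ᵥ (A *ᵥ 1)) := by
    rw [hlhs, hrhs]
    exact Finset.sum_le_sum fun x _ => Finset.sum_le_sum fun y _ =>
      Nat.mul_le_mul_left _ (hu.mul_add_mul_le hv x y)
  omega

end Chebyshev

lemma mul_dotProduct_eq_dotProduct_mul {α R : Type*} [Fintype α] [NonUnitalSemiring R]
    (u v w : α → R) : (u * v) ⬝ᵥ w = u ⬝ᵥ (v * w) := by
  simp only [dotProduct, Pi.mul_apply, mul_assoc]

section PathDomination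

variable {α K : Type*} [Fintype α] [DecidableEq α] [LinearOrder K] {κ : α → K}
  {M : Matrix α α ℕ} {u : α → ℕ}

def pathVec (M : Matrix α α ℕ) (k : ℕ) : α → ℕ := (M ^ k) *ᵥ 1

lemma pathVec_zero (M : Matrix α α ℕ) : pathVec M 0 = 1 := by
  simp [pathVec]

lemma pathVec_succ (M : Matrix α α ℕ) (k : ℕ) : pathVec M (k + 1) = M *ᵥ pathVec M k := by
  rw [pathVec, pathVec, mulVec_mulVec, pow_succ']

lemma pathVec_add (M : Matrix α α ℕ) (p q : ℕ) : pathVec M (p + q) = (M ^ q) *ᵥ pathVec M p := by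
  rw [pathVec, pathVec, mulVec_mulVec, pow_add, pow_mul_comm]

def PreservesMonotoneAlong (κ : α → K) (M : Matrix α α ℕ) : Prop :=
  ∀ ⦃w⦄, MonotoneAlong κ w → MonotoneAlong κ (M *ᵥ w)

lemma PreservesMonotoneAlong.pow (hM : PreservesMonotoneAlong κ M) (k : ℕ) :
    PreservesMonotoneAlong κ (M ^ k) := by
  induction k with
  | zero => intro w hw; rwa [pow_zero, one_mulVec]
  | succ k ih => intro w hw; rw [pow_succ', ← mulVec_mulVec]; exact hM (ih hw)

lemma PreservesMonotoneAlong.monotoneAlong_pathVec (hM : PreservesMonotoneAlong κ M) (k : ℕ) :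
    MonotoneAlong κ (pathVec M k) :=
  hM.pow k MonotoneAlong.one

lemma MonotoneAlong.dotProduct_pathVec_add_le (hMs : M.IsSymm) (hM : PreservesMonotoneAlong κ M)
    (hu : MonotoneAlong κ u) (p q : ℕ) :
    u ⬝ᵥ pathVec M (p + q) ≤ u ⬝ᵥ (pathVec M p * pathVec M q) := by
  rw [pathVec_add, ← mul_dotProduct_eq_dotProduct_mul]
  exact hu.dotProduct_mulVec_le (hMs.pow q) (hM.monotoneAlong_pathVec p)

def PathDominated (κ : α → K) (M : Matrix α α ℕ) (n : ℕ) (Y : α → ℕ) : Prop :=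
  MonotoneAlong κ Y ∧ ∀ ⦃u⦄, MonotoneAlong κ u → u ⬝ᵥ pathVec M n ≤ u ⬝ᵥ Y

lemma pathDominated_zero_one : PathDominated κ M 0 1 :=
  ⟨MonotoneAlong.one, fun u _ => by rw [pathVec_zero]⟩

/-- `A * (M *ᵥ B)` is the rooted count vector of the tree obtained by joining the roots of two trees
with rooted count vectors `A` (whose root is kept) and `B`. -/
lemma PathDominated.mul_mulVec (hMs : M.IsSymm) (hM : PreservesMonotoneAlong κ M) {a b : ℕ}
    {A B : α → ℕ} (hA : PathDominated κ M b A) (hB : PathDominated κ M a B) :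
    PathDominated κ M (a + b + 1) (A * (M *ᵥ B)) := by
  refine ⟨hA.1.mul (hM hB.1), fun u hu => ?_⟩
  have hsymm : ∀ v w : α → ℕ, v ⬝ᵥ (M *ᵥ w) = (M *ᵥ v) ⬝ᵥ w := fun v w => by
    rw [dotProduct_mulVec, ← mulVec_transpose, hMs.eq]
  calc u ⬝ᵥ pathVec M (a + b + 1)
      = u ⬝ᵥ pathVec M ((a + 1) + b) := by rw [add_right_comm]
    _ ≤ (u * pathVec M (a + 1)) ⬝ᵥ pathVec M b := by
        rw [mul_dotProduct_eq_dotProduct_mul]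
        exact hu.dotProduct_pathVec_add_le hMs hM _ _
    _ ≤ (u * pathVec M (a + 1)) ⬝ᵥ A := hA.2 (hu.mul (hM.monotoneAlong_pathVec _))
    _ = (M *ᵥ (u * A)) ⬝ᵥ pathVec M a := by
        rw [mul_dotProduct_eq_dotProduct_mul, mul_comm, ← mul_dotProduct_eq_dotProduct_mul,
          pathVec_succ, hsymm]
    _ ≤ (M *ᵥ (u * A)) ⬝ᵥ B := hB.2 (hM (hu.mul hA.1))
    _ = u ⬝ᵥ (A * (M *ᵥ B)) := by rw [← hsymm, mul_dotProduct_eq_dotProduct_mul]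

end PathDomination

lemma Nat.card_subtype_eq_sum_card_fiber {β γ : Type*} [Finite β] [Fintype γ] (P : β → Prop)
    (φ : β → γ) : Nat.card {b // P b} = ∑ c, Nat.card {b // P b ∧ φ b = c} := by
  rw [← Nat.card_sigma]
  exact Nat.card_congr ((Equiv.sigmaFiberEquiv fun b : {b // P b} => φ b).symm.trans
    (Equiv.sigmaCongrRight fun c => Equiv.subtypeSubtypeEquivSubtypeInter P (φ · = c)))

section Colorings

variable {V V' α : Type} (G : SimpleGraph V) (adj : α → α → Prop)

def IsColoring (f : V → α) : Prop := ∀ u v, G.Adj u v → adj (f u) (f v)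

noncomputable def rootedHomCount (r : V) (x : α) : ℕ :=
  Nat.card {f : V → α // IsColoring G adj f ∧ f r = x}

def relMatrix [DecidableRel adj] : Matrix α α ℕ := Matrix.of fun x y => if adj x y then 1 else 0

lemma relMatrix_isSymm [DecidableRel adj] [Std.Symm adj] : (relMatrix adj).IsSymm := by
  ext x y
  simp only [relMatrix, transpose_apply, of_apply]
  exact if_congr (comm_of adj) rfl rfl

lemma relMatrix_mulVec_apply [Fintype α] [DecidableRel adj] (w : α → ℕ) (x : α) :
    (relMatrix adj *ᵥ w) x = ∑ y, if adj x y then w y else 0 := by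
  simp only [relMatrix, mulVec, dotProduct, of_apply, ite_mul, one_mul, zero_mul]

variable {G adj}

lemma homCount_eq_sum_rootedHomCount [Fintype V] [Fintype α] (r : V) :
    homCount G adj = ∑ x, rootedHomCount G adj r x :=
  Nat.card_subtype_eq_sum_card_fiber _ fun f : V → α => f r

lemma rootedHomCount_of_subsingleton [Subsingleton V] (r : V) : rootedHomCount G adj r = 1 := by
  funext x
  refine Nat.card_eq_one_iff_unique.mpr ⟨⟨fun f g => ?_⟩, ⟨⟨fun _ => x, ?_, rfl⟩⟩⟩
  · exact Subtype.ext (funext fun v => by rw [Subsingleton.elim v r, f.2.2, g.2.2])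
  · exact fun u v huv => absurd (Subsingleton.elim u v) (G.ne_of_adj huv)

lemma SimpleGraph.Iso.rootedHomCount_eq {G' : SimpleGraph V'} (e : G ≃g G') (r : V) :
    rootedHomCount G' adj (e r) = rootedHomCount G adj r := by
  funext x
  refine Nat.card_congr (Equiv.subtypeEquiv (e.toEquiv.arrowCongr (Equiv.refl α)).symm ?_)
  intro f
  simp only [IsColoring, Equiv.arrowCongr_symm, Equiv.arrowCongr_apply, Equiv.refl_symm,
    Equiv.symm_symm, Function.comp_apply, Equiv.refl_apply]
  refine and_congr ⟨fun h u v huv => h _ _ (e.map_adj_iff.mpr huv), fun h u v huv => ?_⟩ Iff.rfl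
  obtain ⟨u, rfl⟩ := e.surjective u
  obtain ⟨v, rfl⟩ := e.surjective v
  exact h u v (e.map_adj_iff.mp huv)

end Colorings

section Cut

variable {V α : Type} [Finite V] [Fintype α] {G : SimpleGraph V} {adj : α → α → Prop}
  [DecidableRel adj]

lemma card_isColoring_adj_apply (ρ : V) (x : α) :
    Nat.card {f : V → α // IsColoring G adj f ∧ adj x (f ρ)} =
      (relMatrix adj *ᵥ rootedHomCount G adj ρ) x := by
  rw [Nat.card_subtype_eq_sum_card_fiber _ fun f : V → α => f ρ, relMatrix_mulVec_apply]
  refine Finset.sum_congr rfl fun y _ => ?_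
  split_ifs with hxy
  · exact Nat.card_congr <| Equiv.subtypeEquivRight fun f =>
      ⟨fun ⟨⟨hf, _⟩, hy⟩ => ⟨hf, hy⟩, fun ⟨hf, hy⟩ => ⟨⟨hf, hy ▸ hxy⟩, hy⟩⟩
  · exact Nat.card_eq_zero.mpr (Or.inl ⟨fun ⟨f, ⟨_, hx⟩, hy⟩ => hxy (hy ▸ hx)⟩)

lemma rootedHomCount_eq_mul_of_cut [Std.Symm adj] {r r₁ : V} (hadj : G.Adj r r₁) {S : Set V}
    (hr : r ∉ S) (hr₁ : r₁ ∈ S) (hcut : ∀ a b, G.Adj a b → a ∈ S → b ∉ S → a = r₁ ∧ b = r) :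
    rootedHomCount G adj r = rootedHomCount (G.induce Sᶜ) adj ⟨r, hr⟩ *
      (relMatrix adj *ᵥ rootedHomCount (G.induce S) adj ⟨r₁, hr₁⟩) := by
  classical
  funext x
  have hcross : ∀ f : V → α, f r = x → adj x (f r₁) → ∀ a b, G.Adj a b → a ∈ S → b ∉ S →
      adj (f a) (f b) := by
    rintro f rfl hx a b hab ha hb
    obtain ⟨rfl, rfl⟩ := hcut a b hab ha hb
    exact symm hx
  have hsplit : ∀ f : V → α, IsColoring G adj f ∧ f r = x ↔
      (IsColoring (G.induce S) adj (fun v : S => f v) ∧ adj x (f r₁)) ∧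
        (IsColoring (G.induce Sᶜ) adj (fun v : ↥Sᶜ => f v) ∧ f r = x) := by
    intro f
    refine ⟨fun ⟨hf, hfr⟩ => ⟨⟨fun u v huv => hf u v huv, hfr ▸ hf r r₁ hadj⟩,
      fun u v huv => hf u v huv, hfr⟩, fun ⟨⟨hS, hx⟩, hSc, hfr⟩ => ⟨fun u v huv => ?_, hfr⟩⟩
    by_cases hu : u ∈ S <;> by_cases hv : v ∈ S
    · exact hS ⟨u, hu⟩ ⟨v, hv⟩ huv
    · exact hcross f hfr hx u v huv hu hv
    · exact symm (hcross f hfr hx v u huv.symm hv hu)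
    · exact hSc ⟨u, hu⟩ ⟨v, hv⟩ huv
  rw [Pi.mul_apply, ← card_isColoring_adj_apply, mul_comm]
  exact (Nat.card_congr ((Equiv.subtypeEquiv (Equiv.piEquivPiSubtypeProd (· ∈ S) fun _ => α)
    hsplit).trans Equiv.subtypeProdEquivProd)).trans (Nat.card_prod _ _)

end Cut

section Path

open SimpleGraph

def pathGraphIsoInduceNeZero (n : ℕ) :
    pathGraph (n + 1) ≃g (pathGraph (n + 2)).induce {v | v ≠ 0} where
  toEquiv := finSuccAboveEquiv 0
  map_rel_iff' := by
    intro a b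
    change (pathGraph (n + 2)).Adj (Fin.succAbove 0 a) (Fin.succAbove 0 b) ↔ _
    simp [pathGraph_adj]

variable {α : Type} [Fintype α] [DecidableEq α] {adj : α → α → Prop} [DecidableRel adj]
  [Std.Symm adj]

lemma rootedHomCount_pathGraph (n : ℕ) :
    rootedHomCount (pathGraph (n + 1)) adj 0 = pathVec (relMatrix adj) n := by
  induction n with
  | zero => rw [pathVec_zero]; exact rootedHomCount_of_subsingleton (V := Fin 1) 0
  | succ n ih =>
    have hadj : (pathGraph (n + 2)).Adj 0 1 := by simp [pathGraph_adj]
    have hcut : ∀ a b, (pathGraph (n + 2)).Adj a b → a ∈ {v | v ≠ 0} → b ∉ {v | v ≠ 0} →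
        a = 1 ∧ b = 0 := by
      intro a b hab _ hb
      obtain rfl : b = 0 := not_not.mp hb
      refine ⟨Fin.ext ?_, rfl⟩
      rw [pathGraph_adj, Fin.val_zero] at hab
      rw [Fin.val_one]
      omega
    have : Subsingleton ↥({v : Fin (n + 2) | v ≠ 0}ᶜ) :=
      ⟨fun a b => Subtype.ext ((not_not.mp a.2).trans (not_not.mp b.2).symm)⟩
    rw [rootedHomCount_eq_mul_of_cut hadj (by simp) (by simp) hcut,
      rootedHomCount_of_subsingleton, one_mul, pathVec_succ, ← ih,
      ← (pathGraphIsoInduceNeZero n).rootedHomCount_eq]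
    rfl

end Path

namespace SimpleGraph

variable {V : Type*} {G T : SimpleGraph V}

lemma Connected.reachable_deleteEdges_or (hG : G.Connected) {x y : V} (hxy : G.Adj x y) (w : V) :
    (G.deleteEdges {s(x, y)}).Reachable w x ∨ (G.deleteEdges {s(x, y)}).Reachable w y := by
  classical
  obtain ⟨P, hP⟩ := hG.exists_isPath w x
  by_cases heP : s(x, y) ∈ P.edges
  · have hyP := P.snd_mem_support_of_mem_edges heP
    have hxP₁ := Walk.endpoint_notMem_support_takeUntil hP hyP hxy.ne
    have heP₁ : s(x, y) ∉ (P.takeUntil y hyP).edges :=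
      fun h => hxP₁ ((P.takeUntil y hyP).fst_mem_support_of_mem_edges h)
    exact Or.inr ⟨(P.takeUntil y hyP).toDeleteEdges {s(x, y)}
      fun e he h => heP₁ (Set.mem_singleton_iff.mp h ▸ he)⟩
  · exact Or.inl ⟨P.toDeleteEdges {s(x, y)} fun e he h => heP (Set.mem_singleton_iff.mp h ▸ he)⟩

lemma IsTree.exists_cut (hT : T.IsTree) {r r₁ : V} (hadj : T.Adj r r₁) :
    ∃ S : Set V, r ∉ S ∧ r₁ ∈ S ∧ (T.induce S).IsTree ∧ (T.induce Sᶜ).IsTree ∧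
      ∀ a b, T.Adj a b → a ∈ S → b ∉ S → a = r₁ ∧ b = r := by
  set D := T.deleteEdges {s(r, r₁)}
  have hbridge : ¬ D.Reachable r r₁ :=
    isBridge_iff.mp (isAcyclic_iff_forall_adj_isBridge.mp hT.isAcyclic hadj)
  have hsubtree : ∀ C : D.ConnectedComponent, (T.induce C.supp).IsTree := fun C =>
    ⟨C.connected_toSimpleGraph.mono (comap_monotone _ (deleteEdges_le _)), hT.isAcyclic.induce _⟩
  have hcompl : (D.connectedComponentMk r₁).suppᶜ = (D.connectedComponentMk r).supp := by
    ext v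
    simp only [Set.mem_compl_iff, ConnectedComponent.mem_supp_iff, ConnectedComponent.eq]
    rcases hT.connected.reachable_deleteEdges_or hadj v with h | h
    · exact iff_of_true (fun h' => hbridge (h.symm.trans h')) h
    · exact iff_of_false (not_not.mpr h) (fun h' => hbridge (h'.symm.trans h))
  refine ⟨(D.connectedComponentMk r₁).supp, fun h => hbridge (ConnectedComponent.exact h),
    rfl, hsubtree _, hcompl ▸ hsubtree _, fun a b hab ha hb => ?_⟩
  by_cases he : s(a, b) = s(r, r₁)
  · rcases Sym2.eq_iff.mp he with ⟨rfl, rfl⟩ | ⟨rfl, rfl⟩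
    · exact absurd ha fun h => hbridge (ConnectedComponent.exact h)
    · exact ⟨rfl, rfl⟩
  · refine absurd ?_ hb
    rw [ConnectedComponent.mem_supp_iff] at ha ⊢
    rw [← ha]
    exact ConnectedComponent.sound (Adj.reachable (by simp [D, hab, he])).symm

end SimpleGraph

section HoffmanLondon

open SimpleGraph

variable {α K : Type} [Fintype α] [DecidableEq α] [LinearOrder K] {adj : α → α → Prop}
  [DecidableRel adj] [Std.Symm adj] {κ : α → K}

lemma pathDominated_rootedHomCount_of_isTree (hκ : PreservesMonotoneAlong κ (relMatrix adj))
    {V : Type} [Finite V] {T : SimpleGraph V} (hT : T.IsTree) {n : ℕ} (hcard : Nat.card V = n + 1)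
    (r : V) : PathDominated κ (relMatrix adj) n (rootedHomCount T adj r) := by
  classical
  induction n using Nat.strong_induction_on generalizing V with
  | _ n ih =>
  rcases n with _ | n
  · have : Subsingleton V := (Nat.card_eq_one_iff_unique.mp hcard).1
    rw [rootedHomCount_of_subsingleton]
    exact pathDominated_zero_one
  have : Nontrivial V := Finite.one_lt_card_iff_nontrivial.mp (by omega)
  obtain ⟨r₁, hadj⟩ := hT.connected.preconnected.exists_adj_of_nontrivial r
  obtain ⟨S, hr, hr₁, hS, hSc, hcut⟩ := hT.exists_cut hadj
  have hsum : Nat.card S + Nat.card ↥Sᶜ = n + 2 := by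
    rw [← Nat.card_sum, ← hcard]
    exact Nat.card_congr (Equiv.sumCompl (· ∈ S))
  obtain ⟨a, ha⟩ : ∃ a, Nat.card S = a + 1 :=
    Nat.exists_eq_add_one.mpr (Nat.card_pos_iff.mpr ⟨⟨⟨r₁, hr₁⟩⟩, inferInstance⟩)
  obtain ⟨b, hb⟩ : ∃ b, Nat.card ↥Sᶜ = b + 1 :=
    Nat.exists_eq_add_one.mpr (Nat.card_pos_iff.mpr ⟨⟨⟨r, hr⟩⟩, inferInstance⟩)
  obtain rfl : n = a + b := by omega
  rw [rootedHomCount_eq_mul_of_cut hadj hr hr₁ hcut]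
  exact (ih b (by omega) hSc hb _).mul_mulVec (relMatrix_isSymm adj) hκ (ih a (by omega) hS ha _)

theorem homCount_pathGraph_le_of_preservesMonotoneAlong
    (hκ : PreservesMonotoneAlong κ (relMatrix adj)) {V : Type} [Fintype V] {T : SimpleGraph V}
    (hT : T.IsTree) {n : ℕ} (hn : Fintype.card V = n) :
    homCount (pathGraph n) adj ≤ homCount T adj := by
  have : Nonempty V := hT.connected.nonempty
  obtain ⟨k, rfl⟩ : ∃ k, n = k + 1 := Nat.exists_eq_add_one.mpr (hn ▸ Fintype.card_pos)
  let r : V := Classical.arbitrary V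
  rw [homCount_eq_sum_rootedHomCount 0, homCount_eq_sum_rootedHomCount r,
    rootedHomCount_pathGraph, ← one_dotProduct, ← one_dotProduct]
  exact (pathDominated_rootedHomCount_of_isTree hκ hT (Nat.card_eq_fintype_card.trans hn) r).2
    MonotoneAlong.one

end HoffmanLondon

section Star

variable {t : ℕ} {m : Fin (t + 1) → ℕ}

instance : DecidableRel (starBlowupAdj t m) := fun x y =>
  inferInstanceAs (Decidable (x.1 = y.1 ∨ x.1 = 0 ∨ y.1 = 0))

instance : Std.Symm (starBlowupAdj t m) := ⟨fun x y h => by unfold starBlowupAdj at *; tauto⟩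

def starKey (m : Fin (t + 1) → ℕ) (x : Σ i, Fin (m i)) : WithTop ℕ :=
  if x.1 = 0 then ⊤ else (m x.1 : WithTop ℕ)

lemma relMatrix_starBlowupAdj_mulVec_apply_of_eq_zero (w : (Σ i, Fin (m i)) → ℕ)
    {x : Σ i, Fin (m i)} (hx : x.1 = 0) :
    (relMatrix (starBlowupAdj t m) *ᵥ w) x = ∑ y, w y := by
  simp [relMatrix_mulVec_apply, starBlowupAdj, hx]

lemma relMatrix_starBlowupAdj_mulVec_apply_of_ne_zero (w : (Σ i, Fin (m i)) → ℕ)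
    {x : Σ i, Fin (m i)} (hx : x.1 ≠ 0) :
    (relMatrix (starBlowupAdj t m) *ᵥ w) x =
      ∑ s : Fin (m 0), w ⟨0, s⟩ + ∑ s : Fin (m x.1), w ⟨x.1, s⟩ := by
  have hcluster : ∀ j, (∑ s : Fin (m j), if starBlowupAdj t m x ⟨j, s⟩ then w ⟨j, s⟩ else 0) =
      (if j = 0 then ∑ s : Fin (m j), w ⟨j, s⟩ else 0) +
        (if j = x.1 then ∑ s : Fin (m j), w ⟨j, s⟩ else 0) := by
    intro j
    by_cases h0 : j = 0
    · subst h0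
      simp [starBlowupAdj, Ne.symm hx]
    · by_cases hj : j = x.1
      · subst hj
        simp [starBlowupAdj, hx]
      · simp [starBlowupAdj, h0, hx, hj, Ne.symm hj]
  rw [relMatrix_mulVec_apply, Fintype.sum_sigma]
  simp only [hcluster, Finset.sum_add_distrib, Finset.sum_ite_eq', Finset.mem_univ, if_true]

lemma preservesMonotoneAlong_starKey :
    PreservesMonotoneAlong (starKey m) (relMatrix (starBlowupAdj t m)) := by
  intro w hw x y hxy
  by_cases hy : y.1 = 0
  · rw [relMatrix_starBlowupAdj_mulVec_apply_of_eq_zero w hy, relMatrix_mulVec_apply]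
    exact Finset.sum_le_sum fun z _ => by split_ifs <;> simp
  have hx : x.1 ≠ 0 := fun hx => by simp [starKey, hx, hy] at hxy
  have hm : m x.1 ≤ m y.1 := by simpa [starKey, hx, hy] using hxy
  rw [relMatrix_starBlowupAdj_mulVec_apply_of_ne_zero w hx,
    relMatrix_starBlowupAdj_mulVec_apply_of_ne_zero w hy]
  refine Nat.add_le_add_left ?_ _
  -- `hw hxy` compares any two vertices of the clusters `x.1` and `y.1`: `starKey` only sees
  -- the cluster.
  calc ∑ s : Fin (m x.1), w ⟨x.1, s⟩
      ≤ ∑ s : Fin (m x.1), w ⟨y.1, Fin.castLE hm s⟩ := Finset.sum_le_sum fun s _ => hw hxy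
    _ = ∑ s ∈ Finset.univ.map (Fin.castLEEmb hm), w ⟨y.1, s⟩ := by
        rw [Finset.sum_map]; rfl
    _ ≤ ∑ s : Fin (m y.1), w ⟨y.1, s⟩ := Finset.sum_le_sum_of_subset (Finset.subset_univ _)

end Star

theorem star_blowup_hoffman_london_general (t : ℕ) (m : Fin (t + 1) → ℕ) :
    ∀ n : ℕ, 1 ≤ n → ∀ T : SimpleGraph (Fin n), T.IsTree →
      homCount (SimpleGraph.pathGraph n) (starBlowupAdj t m) ≤
        homCount T (starBlowupAdj t m) := by
  intro n _ T hT
  exact homCount_pathGraph_le_of_preservesMonotoneAlong preservesMonotoneAlong_starKey hT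
    (Fintype.card_fin n)

/-- **Corollary.** For any vector `m` of positive integers, the blow-up of the fully
looped star `S_{t+1}^∘` by `m` is Hoffman-London. -/
theorem star_blowup_hoffman_london (t : ℕ) (m : Fin (t + 1) → ℕ) (hm : ∀ i, 1 ≤ m i) :
    ∀ n : ℕ, 1 ≤ n → ∀ T : SimpleGraph (Fin n), T.IsTree →
      homCount (SimpleGraph.pathGraph n) (starBlowupAdj t m) ≤
        homCount T (starBlowupAdj t m) :=
  star_blowup_hoffman_london_general t m
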